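/- For all integers m, n ≥ 0, Σ_{l=0}^{m} (−1)^{l+m} · l! · S(m,l) · (l+1)^n = Σ_{j=0}^{min(m,n)} (j!)² · S(m+1, j+1) · S(n+1, j+1). -/

import Mathlib

/-!
Expand `(l + 1)^n = ∑ⱼ S(n+1, j+1) · j! · C(l, j)` in falling factorials of `l` and swap the
two sums. The inner sum `∑ₗ (-1)^(l+m) · l! · S(m, l) · C(l, j)` equals `j! · S(m+1, j+1)`, and
the terms with `j > m` vanish because then `S(m+1, j+1) = 0`. Both the expansion and the inner
sum follow by induction from the recurrence `S(n+1, k) = k · S(n, k) + S(n, k-1)`, used in the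
summed form `sum_range_stirlingSecond_succ_mul`.
-/

/-- The Stirling number of the second kind `S(m, l)`. -/
def stirling : ℕ → ℕ → ℕ
  | 0, 0 => 1
  | 0, _ + 1 => 0
  | _ + 1, 0 => 0
  | m + 1, l + 1 => (l + 1) * stirling m (l + 1) + stirling m l

open Finset Nat

theorem stirling_eq_stirlingSecond : stirling = stirlingSecond := by
  funext m l
  induction m generalizing l with
  | zero => cases l <;> rfl
  | succ m ih =>
    cases l with
    | zero => rfl
    | succ l => rw [stirling, stirlingSecond_succ_succ, ih, ih]

theorem sum_range_stirlingSecond_succ_mul {R : Type*} [CommSemiring R] (n : ℕ) (f : ℕ → R) :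
    ∑ k ∈ range (n + 2), (stirlingSecond (n + 1) k : R) * f k =
      ∑ k ∈ range (n + 1), (stirlingSecond n k : R) * (k * f k + f (k + 1)) := by
  have hshift : ∑ k ∈ range (n + 1), ((k : R) + 1) * stirlingSecond n (k + 1) * f (k + 1) =
      ∑ k ∈ range (n + 1), (k : R) * stirlingSecond n k * f k := by
    rw [sum_range_succ, stirlingSecond_eq_zero_of_lt n.lt_succ_self, sum_range_succ' _ n]
    simp
  rw [sum_range_succ', stirlingSecond_succ_zero, Nat.cast_zero, zero_mul, add_zero]
  calc ∑ k ∈ range (n + 1), (stirlingSecond (n + 1) (k + 1) : R) * f (k + 1)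
      = ∑ k ∈ range (n + 1), ((k : R) + 1) * stirlingSecond n (k + 1) * f (k + 1) +
          ∑ k ∈ range (n + 1), (stirlingSecond n k : R) * f (k + 1) := by
        rw [← sum_add_distrib]
        refine sum_congr rfl fun k _ => ?_
        rw [stirlingSecond_succ_succ]
        push_cast
        ring
    _ = _ := by
        rw [hshift, ← sum_add_distrib]
        exact sum_congr rfl fun k _ => by ring

theorem mul_descFactorial_eq_descFactorial_succ_add (x k : ℕ) :
    x * x.descFactorial k = x.descFactorial (k + 1) + k * x.descFactorial k := by
  rw [descFactorial_succ, ← add_mul]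
  rcases le_or_gt k x with h | h
  · rw [Nat.sub_add_cancel h]
  · simp [descFactorial_eq_zero_iff_lt.mpr h]

theorem pow_eq_sum_stirlingSecond_mul_descFactorial (x n : ℕ) :
    x ^ n = ∑ k ∈ range (n + 1), stirlingSecond n k * x.descFactorial k := by
  induction n with
  | zero => simp
  | succ n ih =>
    have h := sum_range_stirlingSecond_succ_mul n x.descFactorial
    simp only [Nat.cast_id] at h
    rw [h, pow_succ, ih, sum_mul]
    refine sum_congr rfl fun k _ => ?_
    rw [mul_assoc, mul_comm _ x, mul_descFactorial_eq_descFactorial_succ_add, add_comm]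

theorem add_one_pow_eq_sum_stirlingSecond_succ_mul_descFactorial (x n : ℕ) :
    (x + 1) ^ n = ∑ j ∈ range (n + 1), stirlingSecond (n + 1) (j + 1) * x.descFactorial j := by
  -- `k - 1` is truncated at `k = 0`, where the factor `S(n+1, 0)` vanishes.
  have h := sum_range_stirlingSecond_succ_mul n (fun k => x.descFactorial (k - 1))
  rw [sum_range_succ', stirlingSecond_succ_zero] at h
  simp only [Nat.cast_id, add_tsub_cancel_right, zero_mul, add_zero] at h
  rw [h, pow_eq_sum_stirlingSecond_mul_descFactorial]
  refine sum_congr rfl fun k _ => ?_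
  congr 1
  cases k with
  | zero => simp
  | succ k =>
    rw [succ_descFactorial_succ, add_tsub_cancel_right, add_mul,
      mul_descFactorial_eq_descFactorial_succ_add]
    ring

theorem succ_mul_choose_succ_sub_mul_choose (l j : ℕ) :
    ((l : ℤ) + 1) * (l + 1).choose (j + 1) - l * l.choose (j + 1) =
      (j + 2) * l.choose (j + 1) + (j + 1) * l.choose j := by
  have h1 := add_one_mul_choose_eq l j
  have h2 := choose_succ_succ' l j
  zify at h1 h2
  linear_combination h1 + ((l : ℤ) + j + 2) * h2

theorem sum_neg_one_pow_mul_factorial_mul_stirlingSecond_mul_choose (m j : ℕ) :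
    ∑ l ∈ range (m + 1), (-1 : ℤ) ^ (l + m) * l ! * stirlingSecond m l * l.choose j =
      j ! * stirlingSecond (m + 1) (j + 1) := by
  induction m generalizing j with
  | zero => cases j <;> simp [stirlingSecond_succ_succ]
  | succ m ih =>
    have hstep : ∑ l ∈ range (m + 2),
          (-1 : ℤ) ^ (l + (m + 1)) * l ! * stirlingSecond (m + 1) l * l.choose j =
        ∑ l ∈ range (m + 1), (-1 : ℤ) ^ (l + m) * l ! * stirlingSecond m l *
          (((l : ℤ) + 1) * (l + 1).choose j - l * l.choose j) := by
      calc _ = ∑ l ∈ range (m + 2), (stirlingSecond (m + 1) l : ℤ) *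
            ((-1 : ℤ) ^ (l + (m + 1)) * l ! * l.choose j) :=
            sum_congr rfl fun l _ => by ring
        _ = _ := sum_range_stirlingSecond_succ_mul m _
        _ = _ := sum_congr rfl fun l _ => by rw [factorial_succ]; push_cast; ring
    rw [hstep]
    cases j with
    | zero => simpa [stirlingSecond_one_right] using ih 0
    | succ j =>
      calc _ = ((j : ℤ) + 2) * ∑ l ∈ range (m + 1),
              (-1 : ℤ) ^ (l + m) * l ! * stirlingSecond m l * l.choose (j + 1) +
            ((j : ℤ) + 1) * ∑ l ∈ range (m + 1),
              (-1 : ℤ) ^ (l + m) * l ! * stirlingSecond m l * l.choose j := by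
            rw [mul_sum, mul_sum, ← sum_add_distrib]
            refine sum_congr rfl fun l _ => ?_
            rw [succ_mul_choose_succ_sub_mul_choose]
            ring
        _ = _ := by
            rw [ih, ih, stirlingSecond_succ_succ (m + 1) (j + 1), factorial_succ]
            push_cast
            ring

/-- `Σ_{l=0}^{m} (−1)^{l+m} · l! · S(m,l) · (l+1)^n
  = Σ_{j=0}^{min(m,n)} (j!)² · S(m+1, j+1) · S(n+1, j+1)`. -/
theorem stirling_sum_identity (m n : ℕ) :
    ∑ l ∈ Finset.range (m + 1),
        (-1 : ℤ) ^ (l + m) * l.factorial * stirling m l * (l + 1) ^ n =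
      ∑ j ∈ Finset.range (min m n + 1),
        (j.factorial : ℤ) ^ 2 * stirling (m + 1) (j + 1) * stirling (n + 1) (j + 1) := by
  rw [stirling_eq_stirlingSecond]
  have hexpand (l : ℕ) : ((l : ℤ) + 1) ^ n =
      ∑ j ∈ range (n + 1), (stirlingSecond (n + 1) (j + 1) : ℤ) * (j ! * l.choose j) := by
    have h := add_one_pow_eq_sum_stirlingSecond_succ_mul_descFactorial l n
    simp only [descFactorial_eq_factorial_mul_choose] at h
    exact_mod_cast h
  have hvanish : ∀ j ∈ range (n + 1), j ∉ range (min m n + 1) →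
      (j ! : ℤ) ^ 2 * stirlingSecond (m + 1) (j + 1) * stirlingSecond (n + 1) (j + 1) = 0 := by
    intro j hjn hjm
    rw [mem_range] at hjn hjm
    rw [stirlingSecond_eq_zero_of_lt (by omega : m + 1 < j + 1)]
    simp
  rw [sum_subset (range_subset_range.mpr (by omega)) hvanish]
  calc _ = ∑ l ∈ range (m + 1), ∑ j ∈ range (n + 1), (stirlingSecond (n + 1) (j + 1) * j ! : ℤ) *
        ((-1 : ℤ) ^ (l + m) * l ! * stirlingSecond m l * l.choose j) := by
        refine sum_congr rfl fun l _ => ?_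
        rw [hexpand, mul_sum]
        exact sum_congr rfl fun j _ => by ring
    _ = ∑ j ∈ range (n + 1), (stirlingSecond (n + 1) (j + 1) * j ! : ℤ) *
        ∑ l ∈ range (m + 1), (-1 : ℤ) ^ (l + m) * l ! * stirlingSecond m l * l.choose j := by
        rw [sum_comm]
        simp_rw [mul_sum]
    _ = _ := sum_congr rfl fun j _ => by
        rw [sum_neg_one_pow_mul_factorial_mul_stirlingSecond_mul_choose]
        ring
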